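/- arXiv:2301.12462 — 7 statements merged into one kernel-verified Lean document; each statement's English description precedes it below -/
import Mathlib

section
/- Let W : [0,1] → ℝ be concave, non-decreasing, and satisfy W(0) = 0. Then for every q ∈ (0,1], q·W(1) + q·∫_q^1 W(t)/t² dt ≤ (1 − ln q)·W(q). -/
open Real Set intervalIntegral

theorem stmt_0 (W : ℝ → ℝ)
    (hconc : ConcaveOn ℝ (Set.Icc (0:ℝ) 1) W)
    (hmono : MonotoneOn W (Set.Icc (0:ℝ) 1))
    (h0 : W 0 = 0) :
    ∀ q ∈ Set.Ioc (0:ℝ) 1,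
      q * W 1 + q * (∫ t in q..1, W t / t ^ 2) ≤ (1 - Real.log q) * W q := by
  intro q hq
  obtain ⟨hq0, hq1⟩ := hq
  -- chord inequality: for q ≤ t ≤ 1, q * W t ≤ t * W q
  have chord : ∀ t, q ≤ t → t ≤ 1 → q * W t ≤ t * W q := by
    intro t htq ht1
    have ht0 : 0 < t := lt_of_lt_of_le hq0 htq
    have hb0 : 0 ≤ q / t := le_of_lt (div_pos hq0 ht0)
    have hb1 : q / t ≤ 1 := (div_le_one ht0).mpr htq
    have := hconc.2 (show (0:ℝ) ∈ Set.Icc (0:ℝ) 1 from ⟨le_rfl, zero_le_one⟩)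
      (show t ∈ Set.Icc (0:ℝ) 1 from ⟨ht0.le, ht1⟩)
      (show (0:ℝ) ≤ 1 - q / t by linarith) (show (0:ℝ) ≤ q / t from hb0)
      (show 1 - q / t + q / t = 1 by ring)
    simp only [smul_eq_mul, mul_zero, zero_add, h0, mul_zero, zero_add] at this
    rw [div_mul_cancel₀ q ht0.ne'] at this
    calc q * W t = t * (q / t * W t) := by field_simp
      _ ≤ t * W q := by nlinarith
  have key : ∀ t ∈ Set.Icc q 1, W t / t ^ 2 ≤ (W q / q) * t⁻¹ := by
    intro t ⟨htq, ht1⟩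
    have ht0 : 0 < t := lt_of_lt_of_le hq0 htq
    have h := chord t htq ht1
    rw [div_le_iff₀ (by positivity)]
    have : (W q / q) * t⁻¹ * t ^ 2 = (t * W q) / q := by field_simp
    rw [this, le_div_iff₀ hq0]
    nlinarith
  -- integrability
  have hint1 : IntervalIntegrable (fun t => W t / t ^ 2) MeasureTheory.volume q 1 := by
    have hW : IntervalIntegrable W MeasureTheory.volume q 1 := by
      apply (hmono.mono _).intervalIntegrable
      rw [Set.uIcc_of_le hq1]
      exact Set.Icc_subset_Icc hq0.le le_rfl
    have hc : ContinuousOn (fun t : ℝ => (t ^ 2)⁻¹) (Set.uIcc q 1) := by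
      apply ContinuousOn.inv₀ (by fun_prop)
      intro t ht
      rw [Set.uIcc_of_le hq1] at ht
      have : 0 < t := lt_of_lt_of_le hq0 ht.1
      positivity
    simpa [div_eq_mul_inv] using hW.mul_continuousOn hc
  have hint2 : IntervalIntegrable (fun t => (W q / q) * t⁻¹) MeasureTheory.volume q 1 := by
    apply IntervalIntegrable.const_mul
    apply ContinuousOn.intervalIntegrable
    apply ContinuousOn.inv₀ (by fun_prop)
    intro t ht
    rw [Set.uIcc_of_le hq1] at ht
    exact ne_of_gt (lt_of_lt_of_le hq0 ht.1)
  have hIle : (∫ t in q..1, W t / t ^ 2) ≤ ∫ t in q..1, (W q / q) * t⁻¹ :=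
    intervalIntegral.integral_mono_on hq1 hint1 hint2 key
  have hIval : (∫ t in q..1, (W q / q) * t⁻¹) = (W q / q) * (-Real.log q) := by
    rw [intervalIntegral.integral_const_mul, integral_inv]
    · rw [Real.log_div one_ne_zero (ne_of_gt hq0), Real.log_one]; ring
    · rw [Set.uIcc_of_le hq1]
      intro h
      exact absurd h.1 (not_le.mpr hq0)
  have h1 : q * W 1 ≤ W q := by
    have := chord 1 hq1 le_rfl
    linarith
  have h2 : q * (∫ t in q..1, W t / t ^ 2) ≤ - (W q * Real.log q) := by
    have := mul_le_mul_of_nonneg_left (hIle.trans_eq hIval) hq0.le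
    calc q * (∫ t in q..1, W t / t ^ 2) ≤ q * ((W q / q) * (-Real.log q)) := this
      _ = - (W q * Real.log q) := by field_simp
  linarith [h1, h2]
end

section
/- For every x ∈ (0,1], (1 + (1 − x)/(1 − ln x)) · (1 − ln x + ln(1 − ln x)) ≤ 2.27 · (0.577 − ln x). -/
open Real

set_option maxHeartbeats 1000000

private lemma exp_hundredth_lt : Real.exp (1/100) < 1.01005017 := by
  by_contra hcon
  push_neg at hcon
  have h1 : ((1.01005017:ℝ))^100 ≤ (Real.exp (1/100))^100 :=
    pow_le_pow_left₀ (by norm_num) hcon 100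
  have h2 : (Real.exp (1/100))^100 = Real.exp 1 := by
    rw [← Real.exp_nat_mul]; norm_num
  have h3 : (2.7182818286:ℝ) < (1.01005017:ℝ)^100 := by norm_num
  have h4 := Real.exp_one_lt_d9
  rw [h2] at h1
  linarith

private lemma exp_hundredth_gt : (1.01005016:ℝ) < Real.exp (1/100) := by
  by_contra hcon
  push_neg at hcon
  have h1 : (Real.exp (1/100))^100 ≤ ((1.01005016:ℝ))^100 :=
    pow_le_pow_left₀ (Real.exp_nonneg _) hcon 100
  have h2 : (Real.exp (1/100))^100 = Real.exp 1 := by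
    rw [← Real.exp_nat_mul]; norm_num
  have h3 : ((1.01005016:ℝ))^100 < 2.7182818283 := by norm_num
  have h4 := Real.exp_one_gt_d9
  rw [h2] at h1
  linarith

private lemma expb (p : ℕ) (Ea : ℝ) (hEa : Ea * (1.01005017:ℝ)^p ≤ 1) :
    Ea ≤ Real.exp (-((p:ℝ)/100)) := by
  have h1 : Real.exp ((p:ℝ)/100) = (Real.exp (1/100))^p := by
    rw [← Real.exp_nat_mul]; congr 1; ring
  have h2 : (Real.exp (1/100))^p ≤ (1.01005017:ℝ)^p :=
    pow_le_pow_left₀ (Real.exp_nonneg _) exp_hundredth_lt.le p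
  have h3 : Real.exp (-((p:ℝ)/100)) * Real.exp ((p:ℝ)/100) = 1 := by
    rw [← Real.exp_add]; simp
  have h4 : (0:ℝ) < (1.01005017:ℝ)^p := by positivity
  have h6 := Real.exp_pos (-((p:ℝ)/100))
  nlinarith [mul_le_mul_of_nonneg_left h2 h6.le]

private lemma logb (y U : ℝ) (q r : ℕ) (hU : U = (q:ℝ)/100 + (r:ℝ)/100000) (hy : 0 < y)
    (hle : y ≤ (1.01005016:ℝ)^q * (1 + (r:ℝ)/100000)) : Real.log y ≤ U := by
  rw [Real.log_le_iff_le_exp hy, hU]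
  have h1 : Real.exp ((q:ℝ)/100 + (r:ℝ)/100000) = (Real.exp (1/100))^q * Real.exp ((r:ℝ)/100000) := by
    rw [Real.exp_add]; congr 1; rw [← Real.exp_nat_mul]; congr 1; ring
  have h2 : (1.01005016:ℝ)^q ≤ (Real.exp (1/100))^q :=
    pow_le_pow_left₀ (by norm_num) exp_hundredth_gt.le q
  have h3 : (1:ℝ) + (r:ℝ)/100000 ≤ Real.exp ((r:ℝ)/100000) := by
    linarith [Real.add_one_le_exp ((r:ℝ)/100000)]
  have h4 : (0:ℝ) ≤ 1 + (r:ℝ)/100000 := by positivity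
  calc y ≤ (1.01005016:ℝ)^q * (1 + (r:ℝ)/100000) := hle
    _ ≤ (Real.exp (1/100))^q * Real.exp ((r:ℝ)/100000) :=
        mul_le_mul h2 h3 h4 (by positivity)
    _ = Real.exp ((q:ℝ)/100 + (r:ℝ)/100000) := h1.symm

private lemma piece (a b Ea La c s : ℝ) (ha0 : 0 ≤ a) (hab : a ≤ s) (hsb : s ≤ b) (hba : b ≤ a + 1)
    (hEa0 : 0 ≤ Ea) (hc : (1+a)*c = 1) (hEa : Ea ≤ Real.exp (-a)) (hLa : Real.log (1+a) ≤ La)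
    (hquad : ∀ t : ℝ, a ≤ t → t ≤ b →
      (2 + t - Ea*(1-(t-a))) * (1 + t + La + (t-a)*c) ≤ 2.27*(0.577+t)*(1+t)) :
    (2 + s - Real.exp (-s)) * (1 + s + Real.log (1+s)) ≤ 2.27*(0.577+s)*(1+s) := by
  have hs0 : 0 ≤ s := le_trans ha0 hab
  have h1a : (0:ℝ) < 1 + a := by linarith
  have hc0 : 0 < c := by nlinarith
  have hE : Ea*(1-(s-a)) ≤ Real.exp (-s) := by
    have e1 : Real.exp (-a) * Real.exp (-(s-a)) = Real.exp (-s) := by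
      rw [← Real.exp_add]; congr 1; ring
    have e2 : 1-(s-a) ≤ Real.exp (-(s-a)) := by linarith [Real.add_one_le_exp (-(s-a))]
    have e3 : (0:ℝ) ≤ 1-(s-a) := by linarith
    nlinarith [Real.exp_pos (-a)]
  have hL : Real.log (1+s) ≤ La + (s-a)*c := by
    have l2 : Real.log ((1+s)/(1+a)) ≤ (1+s)/(1+a) - 1 :=
      Real.log_le_sub_one_of_pos (by positivity)
    have l1 : Real.log ((1+s)/(1+a)) = Real.log (1+s) - Real.log (1+a) :=
      Real.log_div (by linarith) (by linarith)
    have l3 : (1+s)/(1+a) - 1 = (s-a)*c := by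
      have l4 : (1+s)/(1+a) = (1+s)*c := by
        rw [div_eq_iff (ne_of_gt h1a)]
        linear_combination (-(1+s))*hc
      rw [l4]
      linear_combination hc
    rw [l1, l3] at l2
    linarith
  have hEs1 : Real.exp (-s) ≤ 1 := by
    rw [show (1:ℝ) = Real.exp 0 by simp]
    exact Real.exp_le_exp.mpr (by linarith)
  have hlogpos : 0 ≤ Real.log (1+s) := Real.log_nonneg (by linarith)
  have hdiv : 0 ≤ (s-a)*c := mul_nonneg (by linarith) hc0.le
  have hLa0 : 0 ≤ La := le_trans (Real.log_nonneg (by linarith)) hLa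
  calc (2 + s - Real.exp (-s)) * (1 + s + Real.log (1+s))
      ≤ (2 + s - Ea*(1-(s-a))) * (1 + s + La + (s-a)*c) := by
        apply mul_le_mul (by linarith) (by linarith) (by linarith) (by nlinarith)
    _ ≤ 2.27*(0.577+s)*(1+s) := hquad s hab hsb

private lemma key (s : ℝ) (hs : 0 ≤ s) :
    (2 + s - Real.exp (-s)) * (1 + s + Real.log (1+s)) ≤ 2.27*(0.577+s)*(1+s) := by

  rcases le_total s (0.2:ℝ) with h0 | h0
  · -- piece 0
    have hEa : (1:ℝ) ≤ Real.exp (-(0:ℝ)) := by simp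
    have hLa : Real.log (1+(0:ℝ)) ≤ (0:ℝ) := by norm_num
    refine piece 0 0.2 1 0 1 s (by norm_num) hs h0 (by norm_num)
      (by norm_num) (by norm_num) hEa hLa ?_
    intro t ht1 ht2
    nlinarith [mul_nonneg (sub_nonneg.2 ht1) (sub_nonneg.2 ht2)]
  · -- next
    rcases le_total s (0.4:ℝ) with h1 | h1
    · -- piece 1
      have hEa : (0.8187307:ℝ) ≤ Real.exp (-(0.2:ℝ)) := by
        have h := expb 20 0.8187307 (by norm_num)
        rw [show -(((20:ℕ):ℝ)/100) = -(0.2:ℝ) by norm_num] at h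
        exact h
      have hLa : Real.log (1+(0.2:ℝ)) ≤ (0.18233:ℝ) :=
        logb (1+(0.2:ℝ)) (0.18233:ℝ) 18 233 (by norm_num) (by norm_num) (by norm_num)
      refine piece 0.2 0.4 0.8187307 0.18233 (5/6) s (by norm_num) h0 h1 (by norm_num)
        (by norm_num) (by norm_num) hEa hLa ?_
      intro t ht1 ht2
      nlinarith [mul_nonneg (sub_nonneg.2 ht1) (sub_nonneg.2 ht2)]
    · -- next
      rcases le_total s (0.55:ℝ) with h2 | h2
      · -- piece 2
        have hEa : (0.6703199:ℝ) ≤ Real.exp (-(0.4:ℝ)) := by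
          have h := expb 40 0.6703199 (by norm_num)
          rw [show -(((40:ℕ):ℝ)/100) = -(0.4:ℝ) by norm_num] at h
          exact h
        have hLa : Real.log (1+(0.4:ℝ)) ≤ (0.3365:ℝ) :=
          logb (1+(0.4:ℝ)) (0.3365:ℝ) 33 650 (by norm_num) (by norm_num) (by norm_num)
        refine piece 0.4 0.55 0.6703199 0.3365 (5/7) s (by norm_num) h1 h2 (by norm_num)
          (by norm_num) (by norm_num) hEa hLa ?_
        intro t ht1 ht2
        nlinarith [mul_nonneg (sub_nonneg.2 ht1) (sub_nonneg.2 ht2)]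
      · -- next
        rcases le_total s (0.65:ℝ) with h3 | h3
        · -- piece 3
          have hEa : (0.5769497:ℝ) ≤ Real.exp (-(0.55:ℝ)) := by
            have h := expb 55 0.5769497 (by norm_num)
            rw [show -(((55:ℕ):ℝ)/100) = -(0.55:ℝ) by norm_num] at h
            exact h
          have hLa : Real.log (1+(0.55:ℝ)) ≤ (0.43829:ℝ) :=
            logb (1+(0.55:ℝ)) (0.43829:ℝ) 43 829 (by norm_num) (by norm_num) (by norm_num)
          refine piece 0.55 0.65 0.5769497 0.43829 (20/31) s (by norm_num) h2 h3 (by norm_num)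
            (by norm_num) (by norm_num) hEa hLa ?_
          intro t ht1 ht2
          nlinarith [mul_nonneg (sub_nonneg.2 ht1) (sub_nonneg.2 ht2)]
        · -- next
          rcases le_total s (0.72:ℝ) with h4 | h4
          · -- piece 4
            have hEa : (0.5220456:ℝ) ≤ Real.exp (-(0.65:ℝ)) := by
              have h := expb 65 0.5220456 (by norm_num)
              rw [show -(((65:ℕ):ℝ)/100) = -(0.65:ℝ) by norm_num] at h
              exact h
            have hLa : Real.log (1+(0.65:ℝ)) ≤ (0.50078:ℝ) :=
              logb (1+(0.65:ℝ)) (0.50078:ℝ) 50 78 (by norm_num) (by norm_num) (by norm_num)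
            refine piece 0.65 0.72 0.5220456 0.50078 (20/33) s (by norm_num) h3 h4 (by norm_num)
              (by norm_num) (by norm_num) hEa hLa ?_
            intro t ht1 ht2
            nlinarith [mul_nonneg (sub_nonneg.2 ht1) (sub_nonneg.2 ht2)]
          · -- next
            rcases le_total s (0.8:ℝ) with h5 | h5
            · -- piece 5
              have hEa : (0.4867521:ℝ) ≤ Real.exp (-(0.72:ℝ)) := by
                have h := expb 72 0.4867521 (by norm_num)
                rw [show -(((72:ℕ):ℝ)/100) = -(0.72:ℝ) by norm_num] at h
                exact h
              have hLa : Real.log (1+(0.72:ℝ)) ≤ (0.54233:ℝ) :=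
                logb (1+(0.72:ℝ)) (0.54233:ℝ) 54 233 (by norm_num) (by norm_num) (by norm_num)
              refine piece 0.72 0.8 0.4867521 0.54233 (25/43) s (by norm_num) h4 h5 (by norm_num)
                (by norm_num) (by norm_num) hEa hLa ?_
              intro t ht1 ht2
              nlinarith [mul_nonneg (sub_nonneg.2 ht1) (sub_nonneg.2 ht2)]
            · -- next
              rcases le_total s (0.9:ℝ) with h6 | h6
              · -- piece 6
                have hEa : (0.4493288:ℝ) ≤ Real.exp (-(0.8:ℝ)) := by
                  have h := expb 80 0.4493288 (by norm_num)
                  rw [show -(((80:ℕ):ℝ)/100) = -(0.8:ℝ) by norm_num] at h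
                  exact h
                have hLa : Real.log (1+(0.8:ℝ)) ≤ (0.58782:ℝ) :=
                  logb (1+(0.8:ℝ)) (0.58782:ℝ) 58 782 (by norm_num) (by norm_num) (by norm_num)
                refine piece 0.8 0.9 0.4493288 0.58782 (5/9) s (by norm_num) h5 h6 (by norm_num)
                  (by norm_num) (by norm_num) hEa hLa ?_
                intro t ht1 ht2
                nlinarith [mul_nonneg (sub_nonneg.2 ht1) (sub_nonneg.2 ht2)]
              · -- next
                rcases le_total s (1.05:ℝ) with h7 | h7
                · -- piece 7
                  have hEa : (0.4065695:ℝ) ≤ Real.exp (-(0.9:ℝ)) := by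
                    have h := expb 90 0.4065695 (by norm_num)
                    rw [show -(((90:ℕ):ℝ)/100) = -(0.9:ℝ) by norm_num] at h
                    exact h
                  have hLa : Real.log (1+(0.9:ℝ)) ≤ (0.64186:ℝ) :=
                    logb (1+(0.9:ℝ)) (0.64186:ℝ) 64 186 (by norm_num) (by norm_num) (by norm_num)
                  refine piece 0.9 1.05 0.4065695 0.64186 (10/19) s (by norm_num) h6 h7 (by norm_num)
                    (by norm_num) (by norm_num) hEa hLa ?_
                  intro t ht1 ht2
                  nlinarith [mul_nonneg (sub_nonneg.2 ht1) (sub_nonneg.2 ht2)]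
                · -- next
                  rcases le_total s (1.25:ℝ) with h8 | h8
                  · -- piece 8
                    have hEa : (0.3499376:ℝ) ≤ Real.exp (-(1.05:ℝ)) := by
                      have h := expb 105 0.3499376 (by norm_num)
                      rw [show -(((105:ℕ):ℝ)/100) = -(1.05:ℝ) by norm_num] at h
                      exact h
                    have hLa : Real.log (1+(1.05:ℝ)) ≤ (0.71788:ℝ) :=
                      logb (1+(1.05:ℝ)) (0.71788:ℝ) 71 788 (by norm_num) (by norm_num) (by norm_num)
                    refine piece 1.05 1.25 0.3499376 0.71788 (20/41) s (by norm_num) h7 h8 (by norm_num)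
                      (by norm_num) (by norm_num) hEa hLa ?_
                    intro t ht1 ht2
                    nlinarith [mul_nonneg (sub_nonneg.2 ht1) (sub_nonneg.2 ht2)]
                  · -- next
                    rcases le_total s (1.6:ℝ) with h9 | h9
                    · -- piece 9
                      have hEa : (0.2865046:ℝ) ≤ Real.exp (-(1.25:ℝ)) := by
                        have h := expb 125 0.2865046 (by norm_num)
                        rw [show -(((125:ℕ):ℝ)/100) = -(1.25:ℝ) by norm_num] at h
                        exact h
                      have hLa : Real.log (1+(1.25:ℝ)) ≤ (0.81094:ℝ) :=
                        logb (1+(1.25:ℝ)) (0.81094:ℝ) 81 94 (by norm_num) (by norm_num) (by norm_num)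
                      refine piece 1.25 1.6 0.2865046 0.81094 (4/9) s (by norm_num) h8 h9 (by norm_num)
                        (by norm_num) (by norm_num) hEa hLa ?_
                      intro t ht1 ht2
                      nlinarith [mul_nonneg (sub_nonneg.2 ht1) (sub_nonneg.2 ht2)]
                    · -- tail
                      have hL' : Real.log (1+s) ≤ (1+s)/Real.exp 1 := by
                        have l2 : Real.log ((1+s)/Real.exp 1) ≤ (1+s)/Real.exp 1 - 1 :=
                          Real.log_le_sub_one_of_pos (by positivity)
                        rw [Real.log_div (by linarith) (Real.exp_ne_zero 1), Real.log_exp] at l2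
                        linarith
                      have hL : Real.log (1+s) ≤ (1+s) * (2.7182818283)⁻¹ := by
                        have he := Real.exp_one_gt_d9
                        have h1 : (1+s)/Real.exp 1 ≤ (1+s) * (2.7182818283)⁻¹ := by
                          rw [div_eq_mul_inv]
                          apply mul_le_mul_of_nonneg_left _ (by linarith)
                          apply inv_anti₀ (by norm_num) he.le
                        linarith
                      have hE : (0:ℝ) < Real.exp (-s) := Real.exp_pos _
                      have hlogpos : 0 ≤ Real.log (1+s) := Real.log_nonneg (by linarith)
                      calc (2 + s - Real.exp (-s)) * (1 + s + Real.log (1+s))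
                          ≤ (2 + s) * (1 + s + (1+s) * (2.7182818283)⁻¹) := by
                            apply mul_le_mul (by linarith) (by linarith) (by linarith) (by linarith)
                        _ ≤ 2.27*(0.577+s)*(1+s) := by
                          have hstep : (2+s)*(1+(2.7182818283:ℝ)⁻¹) ≤ 2.27*(0.577+s) := by
                            nlinarith [h9]
                          nlinarith [mul_le_mul_of_nonneg_right hstep (show (0:ℝ) ≤ 1+s by linarith)]

theorem stmt_6 :
    ∀ x ∈ Set.Ioc (0:ℝ) 1,
      (1 + (1 - x) / (1 - Real.log x)) * (1 - Real.log x + Real.log (1 - Real.log x))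
        ≤ 2.27 * (0.577 - Real.log x) := by
  intro x hx
  obtain ⟨hx0, hx1⟩ := hx
  have hlx : Real.log x ≤ 0 := Real.log_nonpos hx0.le hx1
  set s : ℝ := -Real.log x with hs_def
  have hs : 0 ≤ s := by simp only [hs_def]; linarith
  have hlog : Real.log x = -s := by rw [hs_def]; ring
  rw [hlog]
  rw [show (1:ℝ) - -s = 1 + s by ring]
  have hxe : x = Real.exp (-s) := by rw [← hlog, Real.exp_log hx0]
  have hpos : (0:ℝ) < 1 + s := by linarith
  have hkey := key s hs
  rw [hxe]
  have heq : 1 + (1 - Real.exp (-s)) / (1+s) = (2 + s - Real.exp (-s))/(1+s) := by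
    field_simp
    ring
  rw [heq, div_mul_eq_mul_div, div_le_iff₀ hpos]
  nlinarith [hkey]
end

section
/- For every x ∈ (0,1], (2/ln 2) · (ln 2 − ln x) ≥ 1.36 · (1 + (1 − x)/(1 − ln x)) · (1 − ln x + ln(1 − ln x)). -/
set_option maxHeartbeats 1000000


open Real

/-- Taylor lower bound for `exp (-s)` on `[0,1]`. -/
lemma exp_neg_taylor_lb (s : ℝ) (h0 : 0 ≤ s) (h1 : s ≤ 1) :
    1 - s + s^2/2 - s^3/6 + s^4/24 - s^5/100 ≤ Real.exp (-s) := by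
  have h := Real.exp_bound (x := -s) (by rw [abs_neg, abs_of_nonneg h0]; exact h1)
    (n := 5) (by norm_num)
  rw [abs_neg, abs_of_nonneg h0] at h
  have hsum : (∑ m ∈ Finset.range 5, (-s) ^ m / m.factorial)
      = 1 - s + s^2/2 - s^3/6 + s^4/24 := by
    simp [Finset.sum_range_succ, Nat.factorial]
    ring
  rw [hsum] at h
  have h3 := (abs_le.mp h).1
  have h2 : (((Nat.succ 5:ℕ) : ℝ) / ((Nat.factorial 5 : ℕ) * (5:ℕ) : ℝ)) = 1/100 := by
    norm_num [Nat.factorial]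
  rw [h2] at h3
  linarith

theorem stmt_7 :
    ∀ x ∈ Set.Ioc (0:ℝ) 1,
      1.36 * ((1 + (1 - x) / (1 - Real.log x)) * (1 - Real.log x + Real.log (1 - Real.log x)))
        ≤ (2 / Real.log 2) * (Real.log 2 - Real.log x) := by
  rintro x ⟨hx0, hx1⟩
  have hlogle : Real.log x ≤ 0 := Real.log_nonpos (le_of_lt hx0) hx1
  set L : ℝ := -Real.log x with hLdef
  have hL0 : 0 ≤ L := by simp [hLdef]; exact hlogle
  have hlogx : Real.log x = -L := by rw [hLdef, neg_neg]
  have hxexp : x = Real.exp (-L) := by rw [← hlogx, Real.exp_log hx0]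
  clear_value L
  have h1L : (0:ℝ) < 1 + L := by linarith
  have hlog2l : (0.6931:ℝ) < Real.log 2 := by
    have := Real.log_two_gt_d9; linarith
  have hlog2u : Real.log 2 < 0.6932 := by
    have := Real.log_two_lt_d9; linarith
  have e1 : 1 - Real.log x = 1 + L := by rw [hlogx]; ring
  rw [e1]
  set S : ℝ := Real.log (1 + L) with hSdef
  clear_value S
  have hS0 : 0 ≤ S := hSdef ▸ Real.log_nonneg (by linarith)
  have hSL : S ≤ L := by
    have := Real.log_le_sub_one_of_pos h1L
    rw [hSdef]; linarith
  have hStan : S ≤ 0.6932 + (L - 1) / 2 := by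
    have hd : Real.log ((1 + L) / 2) = S - Real.log 2 := by
      rw [Real.log_div (by positivity) (by norm_num), hSdef]
    have h2 : Real.log ((1 + L) / 2) ≤ (1 + L) / 2 - 1 :=
      Real.log_le_sub_one_of_pos (by positivity)
    rw [hd] at h2
    linarith
  -- bounds on u = 1 - x
  have hu0 : 0 ≤ 1 - x := by linarith
  have hu1 : 1 - x ≤ 1 := by linarith
  -- RHS lower bound
  have hRHS : (2 / 0.6932) * (0.6931 + L) ≤ (2 / Real.log 2) * (Real.log 2 + L) := by
    have hp : (0:ℝ) < Real.log 2 := by linarith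
    rw [div_mul_eq_mul_div, div_mul_eq_mul_div, div_le_div_iff₀ (by norm_num) hp]
    nlinarith
  have hgoal : 1.36 * ((1 + L + (1 - x)) * (1 + L + S)) ≤ (2 / 0.6932) * (0.6931 + L) * (1 + L) →
      1.36 * ((1 + (1 - x) / (1 + L)) * (1 + L + S)) ≤ (2 / Real.log 2) * (Real.log 2 - Real.log x) := by
    intro h
    have hexpand : 1 + (1 - x) / (1 + L) = (1 + L + (1 - x)) / (1 + L) := by
      field_simp
    rw [hexpand, hlogx]
    have hstep : 1.36 * ((1 + L + (1 - x)) / (1 + L) * (1 + L + S)) ≤ (2 / 0.6932) * (0.6931 + L) := by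
      have heq : 1.36 * ((1 + L + (1 - x)) / (1 + L) * (1 + L + S))
          = 1.36 * ((1 + L + (1 - x)) * (1 + L + S)) / (1 + L) := by
        ring
      rw [heq, div_le_iff₀ h1L]
      linarith
    calc 1.36 * ((1 + L + (1 - x)) / (1 + L) * (1 + L + S))
        ≤ (2 / 0.6932) * (0.6931 + L) := hstep
      _ ≤ (2 / Real.log 2) * (Real.log 2 + L) := hRHS
      _ = (2 / Real.log 2) * (Real.log 2 - -L) := by ring
  apply hgoal
  -- now a case analysis on L
  rcases le_or_gt L 1 with hc1 | hc1
  · -- L ∈ [0,1]: 1 - x ≤ U1 L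
    have hexp := exp_neg_taylor_lb L hL0 hc1
    have hu : 1 - x ≤ L - L^2/2 + L^3/6 - L^4/24 + L^5/100 := by
      rw [hxexp]; linarith
    rcases le_or_gt L 0.4 with hc2 | hc2
    · -- use S ≤ L
      have key : (1 + L + (1 - x)) * (1 + L + S)
          ≤ (1 + L + (L - L^2/2 + L^3/6 - L^4/24 + L^5/100)) * (1 + L + L) := by
        apply mul_le_mul (by linarith) (by linarith) (by linarith) (by linarith)
      have hpoly : 1.36 * ((1 + L + (L - L^2/2 + L^3/6 - L^4/24 + L^5/100)) * (1 + L + L))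
          ≤ (2/0.6932) * (0.6931 + L) * (1 + L) := by
        nlinarith [sq_nonneg L, sq_nonneg (L - 0.4), mul_nonneg hL0 hL0,
          mul_nonneg (mul_nonneg hL0 hL0) hL0, sq_nonneg (L*L), sq_nonneg (L*L*L),
          mul_nonneg (mul_nonneg (mul_nonneg hL0 hL0) hL0) hL0]
      linarith
    · -- use S ≤ tangent
      have hc2' : (0.4:ℝ) ≤ L := le_of_lt hc2
      have key : (1 + L + (1 - x)) * (1 + L + S)
          ≤ (1 + L + (L - L^2/2 + L^3/6 - L^4/24 + L^5/100)) * (1 + L + (0.6932 + (L - 1)/2)) := by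
        apply mul_le_mul (by linarith) (by linarith) (by linarith) (by linarith)
      have hpoly : 1.36 * ((1 + L + (L - L^2/2 + L^3/6 - L^4/24 + L^5/100))
            * (1 + L + (0.6932 + (L - 1)/2)))
          ≤ (2/0.6932) * (0.6931 + L) * (1 + L) := by
        nlinarith [sq_nonneg (L - 0.4), sq_nonneg (1 - L), sq_nonneg (L - 0.7),
          mul_nonneg (sub_nonneg.2 hc2') (sub_nonneg.2 hc1), sq_nonneg (L*L),
          sq_nonneg (L*(1-L)),
          mul_nonneg (mul_nonneg (sub_nonneg.2 hc2') (sub_nonneg.2 hc1)) (sub_nonneg.2 hc1)]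
      linarith
  · rcases le_or_gt L 2 with hc2 | hc2
    · -- L ∈ [1,2] : 1 - x ≤ U2
      set m : ℝ := L - 1 with hmdef
      clear_value m
      have hm0 : 0 ≤ m := by simp [hmdef]; linarith
      have hm1 : m ≤ 1 := by simp [hmdef]; linarith
      have hexp := exp_neg_taylor_lb m hm0 hm1
      have hee : Real.exp (-L) = Real.exp (-1) * Real.exp (-m) := by
        rw [← Real.exp_add]; congr 1; simp [hmdef]; ring
      have he1 : (1 / 2.7182818286 : ℝ) ≤ Real.exp (-1) := by
        rw [Real.exp_neg]
        rw [div_le_iff₀ (by positivity), inv_mul_eq_div, le_div_iff₀ (Real.exp_pos 1)]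
        have := Real.exp_one_lt_d9
        linarith
      have hRpos : (0:ℝ) ≤ 1 - m + m^2/2 - m^3/6 + m^4/24 - m^5/100 := by
        nlinarith [sq_nonneg (1 - m), mul_nonneg (mul_nonneg hm0 hm0) hm0,
          mul_nonneg (mul_nonneg (mul_nonneg hm0 hm0) hm0) (sub_nonneg.2 hm1),
          mul_nonneg (mul_nonneg (mul_nonneg (mul_nonneg hm0 hm0) hm0) hm0) (sub_nonneg.2 hm1)]
      have hu : 1 - x ≤ 1 - (1 / 2.7182818286) * (1 - m + m^2/2 - m^3/6 + m^4/24 - m^5/100) := by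
        rw [hxexp, hee]
        have hmm : (1 / 2.7182818286 : ℝ) * (1 - m + m^2/2 - m^3/6 + m^4/24 - m^5/100)
            ≤ Real.exp (-1) * Real.exp (-m) :=
          mul_le_mul he1 hexp hRpos (le_of_lt (Real.exp_pos _))
        linarith
      have key : (1 + L + (1 - x)) * (1 + L + S)
          ≤ (1 + L + (1 - (1 / 2.7182818286) * (1 - m + m^2/2 - m^3/6 + m^4/24 - m^5/100)))
            * (1 + L + (0.6932 + (L - 1)/2)) := by
        apply mul_le_mul (by linarith) (by linarith) (by linarith) (by linarith)
      have hLm : L = m + 1 := by rw [hmdef]; ring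
      rw [hLm] at key ⊢
      have hpoly : 1.36 * ((1 + (m+1) + (1 - (1 / 2.7182818286)
              * (1 - m + m^2/2 - m^3/6 + m^4/24 - m^5/100)))
            * (1 + (m+1) + (0.6932 + ((m+1) - 1)/2)))
          ≤ (2/0.6932) * (0.6931 + (m+1)) * (1 + (m+1)) := by
        nlinarith [sq_nonneg m, sq_nonneg (1 - m), mul_nonneg hm0 hm0,
          mul_nonneg (mul_nonneg hm0 hm0) hm0, sq_nonneg (m*m), sq_nonneg (m*(1-m)),
          mul_nonneg (mul_nonneg hm0 hm0) (sub_nonneg.2 hm1)]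
      linarith
    · -- L ≥ 2 : 1 - x ≤ 1
      have key : (1 + L + (1 - x)) * (1 + L + S)
          ≤ (1 + L + 1) * (1 + L + (0.6932 + (L - 1)/2)) := by
        apply mul_le_mul (by linarith) (by linarith) (by linarith) (by linarith)
      have hpoly : 1.36 * ((1 + L + 1) * (1 + L + (0.6932 + (L - 1)/2)))
          ≤ (2/0.6932) * (0.6931 + L) * (1 + L) := by
        nlinarith [sq_nonneg (L - 2)]
      linarith
end

section
/- Let n be a positive integer, let v_1, …, v_n ≥ 0 and s_1, …, s_n > 0 be real numbers with v_1/s_1 ≥ v_2/s_2 ≥ … ≥ v_n/s_n, and let C ≥ 0. Let t be the largest index m ∈ {0, 1, …, n} such that ∑_{i=1}^m s_i ≤ C, and suppose t < n. Then for every subset S ⊆ {1, …, n} with ∑_{i∈S} s_i ≤ C, one has ∑_{i∈S} v_i ≤ ∑_{i=1}^{t+1} v_i. -/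
open Finset

theorem stmt_12 (n : ℕ) (hn : 0 < n) (v s : ℕ → ℝ)
    (hv : ∀ i < n, 0 ≤ v i) (hs : ∀ i < n, 0 < s i)
    (hsorted : ∀ i j, i ≤ j → j < n → v j / s j ≤ v i / s i)
    (C : ℝ) (hC : 0 ≤ C)
    (t : ℕ) (ht_le : ∑ i ∈ Finset.range t, s i ≤ C)
    (ht_max : ∀ m ≤ n, (∑ i ∈ Finset.range m, s i) ≤ C → m ≤ t)
    (ht_lt : t < n) :
    ∀ S : Finset ℕ, S ⊆ Finset.range n → (∑ i ∈ S, s i) ≤ C →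
      ∑ i ∈ S, v i ≤ ∑ i ∈ Finset.range (t + 1), v i := by
  intro S hSn hSC
  set A : Finset ℕ := Finset.range (t + 1) with hA
  set r : ℝ := v t / s t with hr
  have hst : 0 < s t := hs t ht_lt
  have hr0 : 0 ≤ r := div_nonneg (hv t ht_lt) hst.le
  have hAC : C < ∑ i ∈ A, s i := by
    by_contra h
    push_neg at h
    have := ht_max (t + 1) ht_lt h
    omega
  -- bound on S \ A
  have h1 : ∀ i ∈ S \ A, v i ≤ r * s i := by
    intro i hi
    simp only [Finset.mem_sdiff, hA, Finset.mem_range, not_lt] at hi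
    have hin : i < n := Finset.mem_range.mp (hSn hi.1)
    have := hsorted t i (by omega) hin
    exact (div_le_iff₀ (hs i hin)).mp this
  -- bound on A \ S
  have h2 : ∀ i ∈ A \ S, r * s i ≤ v i := by
    intro i hi
    simp only [Finset.mem_sdiff, hA, Finset.mem_range] at hi
    have hin : i < n := by omega
    have := hsorted i t (by omega) ht_lt
    exact (le_div_iff₀ (hs i hin)).mp this
  have key : ∑ i ∈ S \ A, s i ≤ ∑ i ∈ A \ S, s i := by
    have e1 : ∑ i ∈ S ∩ A, s i + ∑ i ∈ S \ A, s i = ∑ i ∈ S, s i :=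
      Finset.sum_inter_add_sum_sdiff S A s
    have e2 : ∑ i ∈ A ∩ S, s i + ∑ i ∈ A \ S, s i = ∑ i ∈ A, s i :=
      Finset.sum_inter_add_sum_sdiff A S s
    rw [Finset.inter_comm] at e2
    linarith
  have c1 : ∑ i ∈ S, v i ≤ ∑ i ∈ S ∩ A, v i + r * ∑ i ∈ S \ A, s i := by
    rw [← Finset.sum_inter_add_sum_sdiff S A v, Finset.mul_sum]
    gcongr with i hi
    · exact h1 i hi
  have c2 : ∑ i ∈ S ∩ A, v i + r * ∑ i ∈ A \ S, s i ≤ ∑ i ∈ A, v i := by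
    rw [← Finset.sum_inter_add_sum_sdiff A S v, Finset.inter_comm, Finset.mul_sum]
    gcongr with i hi
    exact h2 i hi
  have c3 : r * ∑ i ∈ S \ A, s i ≤ r * ∑ i ∈ A \ S, s i :=
    mul_le_mul_of_nonneg_left key hr0
  linarith
end

section
/- For every positive integer n, the function q ↦ q/(1 − (1−q)^n) is convex on the interval (0,1]. -/
/-!
Write `D q = 1 - (1 - q) ^ n`. By the quotient rule,
`(q / D)'' = (-q D'' D - 2 (D - q D') D') / D³`.
With `t = 1 - q` the numerator equals `n t^(n-2) (1 - t) ((n + 1) (1 + t^n) - 2 ∑_{k ≤ n} t^k)`,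
and the last factor is `∑_{k ≤ n} (1 - t^k) (1 - t^(n-k)) ≥ 0`.
-/

open Finset

theorem two_mul_sum_range_pow_le {t : ℝ} (h₀ : 0 ≤ t) (h₁ : t ≤ 1) (n : ℕ) :
    2 * ∑ k ∈ range (n + 1), t ^ k ≤ (n + 1) * (1 + t ^ n) := by
  have hterm : ∀ k ∈ range (n + 1),
      (1 - t ^ k) * (1 - t ^ (n - k)) = 1 + t ^ n - t ^ k - t ^ (n - k) := by
    intro k hk
    rw [← pow_mul_pow_sub t (Nat.le_of_lt_succ (mem_range.1 hk))]
    ring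
  have hnonneg : 0 ≤ ∑ k ∈ range (n + 1), (1 - t ^ k) * (1 - t ^ (n - k)) :=
    sum_nonneg fun k _ => mul_nonneg (sub_nonneg.2 (pow_le_one₀ h₀ h₁))
      (sub_nonneg.2 (pow_le_one₀ h₀ h₁))
  have hreflect : ∑ k ∈ range (n + 1), t ^ (n - k) = ∑ k ∈ range (n + 1), t ^ k :=
    sum_range_reflect (t ^ ·) (n + 1)
  rw [sum_congr rfl hterm, sum_sub_distrib, sum_sub_distrib, hreflect, sum_const,
    card_range, nsmul_eq_mul] at hnonneg
  push_cast at hnonneg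
  linarith

theorem two_mul_one_sub_pow_sub_mul_le {t : ℝ} (h₀ : 0 ≤ t) (h₁ : t ≤ 1) (m : ℕ) :
    2 * (1 - t ^ (m + 2) - (1 - t) * ((m + 2) * t ^ (m + 1))) * ((m + 2) * t ^ (m + 1)) ≤
      (1 - t) * ((m + 2) * ((m + 1) * t ^ m)) * (1 - t ^ (m + 2)) := by
  have hsum := two_mul_sum_range_pow_le h₀ h₁ (m + 2)
  have hgeom := mul_neg_geom_sum t (m + 2 + 1)
  set S := ∑ k ∈ range (m + 2 + 1), t ^ k
  have hfactor : 0 ≤ (m + 2) * t ^ m * (1 - t) :=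
    mul_nonneg (by positivity) (sub_nonneg.2 h₁)
  have hdiff : (1 - t) * ((m + 2) * ((m + 1) * t ^ m)) * (1 - t ^ (m + 2)) -
      2 * (1 - t ^ (m + 2) - (1 - t) * ((m + 2) * t ^ (m + 1))) * ((m + 2) * t ^ (m + 1)) =
      (m + 2) * t ^ m * (1 - t) * ((m + 2 + 1) * (1 + t ^ (m + 2)) - 2 * S) := by
    linear_combination (2 * (m + 2) * t ^ m) * hgeom
  push_cast at hsum
  linarith [mul_nonneg hfactor (sub_nonneg.2 hsum)]

theorem convexOn_id_div_of_hasDerivAt {s : Set ℝ} (hs : Convex ℝ s) {D D' D'' : ℝ → ℝ}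
    (hD : ∀ x ∈ s, HasDerivAt D (D' x) x) (hD' : ∀ x ∈ interior s, HasDerivAt D' (D'' x) x)
    (hD₀ : ∀ x ∈ s, 0 < D x)
    (h : ∀ x ∈ interior s, 2 * (D x - x * D' x) * D' x ≤ -(x * D'' x) * D x) :
    ConvexOn ℝ s (fun x => x / D x) := by
  refine convexOn_of_hasDerivWithinAt2_nonneg hs (f' := fun x => (D x - x * D' x) / D x ^ 2)
    (f'' := fun x => (-(x * D'' x) * D x - 2 * (D x - x * D' x) * D' x) / D x ^ 3)
    (continuousOn_id.div (fun x hx => (hD x hx).continuousAt.continuousWithinAt)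
      fun x hx => (hD₀ x hx).ne') (fun x hx => ?_) (fun x hx => ?_) fun x hx => ?_
  · have hDx := hD₀ x (interior_subset hx)
    refine (((hasDerivAt_id' x).fun_div (hD x (interior_subset hx)) hDx.ne').congr_deriv
      ?_).hasDerivWithinAt
    field_simp
  · have hDx := hD₀ x (interior_subset hx)
    have hnum := (hD x (interior_subset hx)).fun_sub ((hasDerivAt_id' x).fun_mul (hD' x hx))
    refine ((hnum.fun_div ((hD x (interior_subset hx)).fun_pow 2)
      (pow_pos hDx 2).ne').congr_deriv ?_).hasDerivWithinAt
    field_simp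
    ring
  · exact div_nonneg (sub_nonneg.2 (h x hx)) (pow_pos (hD₀ x (interior_subset hx)) 3).le

theorem hasDerivAt_one_sub_pow_succ (k : ℕ) (x : ℝ) :
    HasDerivAt (fun x => (1 - x) ^ (k + 1)) (-((k + 1) * (1 - x) ^ k)) x :=
  (((hasDerivAt_id' x).const_sub 1).fun_pow (k + 1)).congr_deriv (by push_cast; ring_nf)

theorem convexOn_div_one_sub_one_sub_pow (m : ℕ) :
    ConvexOn ℝ (Set.Ioc 0 1) (fun q : ℝ => q / (1 - (1 - q) ^ (m + 2))) := by
  refine convexOn_id_div_of_hasDerivAt (convex_Ioc 0 1)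
    (D' := fun q => (m + 2) * (1 - q) ^ (m + 1))
    (D'' := fun q => (m + 2) * -((m + 1) * (1 - q) ^ m))
    (fun q _ => ((hasDerivAt_one_sub_pow_succ (m + 1) q).const_sub 1).congr_deriv
      (by push_cast; ring))
    (fun q _ => (hasDerivAt_one_sub_pow_succ m q).const_mul _) (fun q hq => ?_) fun q hq => ?_
  · have := pow_lt_one₀ (sub_nonneg.2 hq.2) (by linarith [hq.1]) (by omega : m + 2 ≠ 0)
    linarith
  · rw [interior_Ioc] at hq
    have := two_mul_one_sub_pow_sub_mul_le (t := 1 - q) (by linarith [hq.2]) (by linarith [hq.1]) m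
    convert this using 1 <;> ring

theorem stmt_13 (n : ℕ) (hn : 0 < n) :
    ConvexOn ℝ (Set.Ioc (0:ℝ) 1) (fun q : ℝ => q / (1 - (1 - q) ^ n)) := by
  obtain _ | _ | m := n
  · exact absurd hn (lt_irrefl 0)
  · refine (convexOn_const 1 (convex_Ioc 0 1)).congr fun q hq => ?_
    simp [hq.1.ne']
  · exact convexOn_div_one_sub_one_sub_pow m
end

section
/- Let n be a positive integer, let u : [0,1] → ℝ be continuous, and let U(q) = ∫_0^q u(t) dt. Then ∫_0^1 ((1 − (1−t)^n)/t)·u(t) dt = U(1) + ∫_0^1 ((1 − (1−t)^n − n·t·(1−t)^{n−1})/t²)·U(t) dt. -/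
open intervalIntegral Set MeasureTheory
open scoped Interval

/-!
For `t ≠ 0` the weight `(1 - (1 - t) ^ n) / t` is the polynomial `P t = ∑ k < n, (1 - t) ^ k`, and
the weight on the right is `-P' t`. Integrating `P * u` by parts against `U` gives the identity,
since `P 1 = 1` and `U 0 = 0`.
-/

theorem integral_mul_eq_mul_integral_sub_integral_deriv_mul_primitive {P P' u : ℝ → ℝ} {a b : ℝ}
    (hP : ∀ x ∈ [[a, b]], HasDerivAt P (P' x) x) (hP' : IntervalIntegrable P' volume a b)
    (hu : ContinuousOn u [[a, b]]) :
    ∫ x in a..b, P x * u x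
      = P b * (∫ x in a..b, u x) - ∫ x in a..b, P' x * ∫ t in a..x, u t := by
  have hprimitive : ∀ x ∈ Ioo (min a b) (max a b),
      HasDerivAt (fun x ↦ ∫ t in a..x, u t) (u x) x := fun x hx ↦
    integral_hasDerivAt_right
      ((hu.mono (uIcc_subset_uIcc_left (Ioo_subset_Icc_self hx))).intervalIntegrable)
      ((hu.mono Ioo_subset_Icc_self).stronglyMeasurableAtFilter isOpen_Ioo x hx)
      (hu.continuousAt (Icc_mem_nhds hx.1 hx.2))
  have hparts := integral_mul_deriv_eq_deriv_mul_of_hasDerivAt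
    (fun x hx ↦ (hP x hx).continuousAt.continuousWithinAt)
    (continuousOn_primitive_interval hu.integrableOn_Icc)
    (fun x hx ↦ hP x (Ioo_subset_Icc_self hx)) hprimitive hP' hu.intervalIntegrable
  simpa only [integral_same, mul_zero, sub_zero] using hparts

theorem hasDerivAt_geom_sum_one_sub (n : ℕ) (t : ℝ) :
    HasDerivAt (fun t ↦ ∑ k ∈ Finset.range n, (1 - t) ^ k)
      (-∑ k ∈ Finset.range n, (k : ℝ) * (1 - t) ^ (k - 1)) t := by
  simpa [Finset.sum_neg_distrib] using
    HasDerivAt.fun_sum fun k _ ↦ ((hasDerivAt_id t).const_sub 1).pow k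

theorem geom_sum_one_sub_eq_div {t : ℝ} (ht : t ≠ 0) (n : ℕ) :
    ∑ k ∈ Finset.range n, (1 - t) ^ k = (1 - (1 - t) ^ n) / t := by
  rw [eq_div_iff ht]
  linear_combination -geom_sum_mul (1 - t) n

theorem sum_mul_one_sub_pow_pred_eq_div {t : ℝ} (ht : t ≠ 0) (n : ℕ) :
    ∑ k ∈ Finset.range n, (k : ℝ) * (1 - t) ^ (k - 1)
      = (1 - (1 - t) ^ n - n * t * (1 - t) ^ (n - 1)) / t ^ 2 := by
  rw [eq_div_iff (pow_ne_zero 2 ht)]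
  induction n with
  | zero => simp
  | succ n ih =>
    rw [Finset.sum_range_succ, add_mul, ih]
    rcases n with _ | n
    · simp
    · push_cast
      ring

theorem stmt_17 (n : ℕ) (hn : 0 < n) (u : ℝ → ℝ)
    (hu : ContinuousOn u (Set.Icc (0:ℝ) 1))
    (U : ℝ → ℝ) (hU : ∀ q, U q = ∫ t in (0:ℝ)..q, u t) :
    ∫ t in (0:ℝ)..1, ((1 - (1 - t) ^ n) / t) * u t
      = U 1 + ∫ t in (0:ℝ)..1,
          ((1 - (1 - t) ^ n - n * t * (1 - t) ^ (n - 1)) / t ^ 2) * U t := by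
  have hparts := integral_mul_eq_mul_integral_sub_integral_deriv_mul_primitive
    (fun t _ ↦ hasDerivAt_geom_sum_one_sub n t) (Continuous.intervalIntegrable (by fun_prop) 0 1)
    (uIcc_of_le (zero_le_one' ℝ) ▸ hu)
  have hP1 : ∑ k ∈ Finset.range n, (1 - 1 : ℝ) ^ k = 1 := by
    simp [zero_pow_eq, Finset.sum_ite_eq', hn]
  simp only [hP1, one_mul, neg_mul, intervalIntegral.integral_neg, sub_neg_eq_add, ← hU] at hparts
  have hne : ∀ t ∈ Ι (0:ℝ) 1, t ≠ 0 := fun t ht ↦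
    ((uIoc_of_le zero_le_one).subset ht).1.ne'
  calc ∫ t in (0:ℝ)..1, ((1 - (1 - t) ^ n) / t) * u t
      = ∫ t in (0:ℝ)..1, (∑ k ∈ Finset.range n, (1 - t) ^ k) * u t :=
        integral_congr_ae <| ae_of_all _ fun t ht ↦ by
          rw [geom_sum_one_sub_eq_div (hne t ht)]
    _ = _ := hparts
    _ = _ := by
      congr 1
      exact integral_congr_ae <| ae_of_all _ fun t ht ↦ by
        rw [sum_mul_one_sub_pow_pred_eq_div (hne t ht)]
end

section
/- Let n be a positive integer and let U : [0,1] → ℝ be concave with U(0) ≥ 0 and ((1 − (1−q)^n)/q)·U(q) ≤ 1 for all q ∈ (0,1]. Then U(1) + ∫_0^1 ((1 − (1−t)^n − n·t·(1−t)^{n−1})/t²)·U(t) dt ≤ H_n + 1, where H_n = ∑_{j=1}^n 1/j is the n-th harmonic number. -/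
/-!
With `φ(t) = ∑_{k<n} (1-t)^k`, so that `t φ(t) = 1 - (1-t)^n`, the feasibility constraint says
`U(t) ≤ 1/φ(t)`, and the weight `(1 - (1-t)^n - n t (1-t)^{n-1})/t²` is the polynomial `-φ'(t) ≥ 0`.
Hence the integral is at most `∫₀¹ -φ'/φ = log φ(0) - log φ(1) = log n ≤ H_n`, while `U(1) ≤ 1` is
the constraint at `q = 1`.
-/

open Real intervalIntegral Finset

noncomputable section

namespace OneSubGeomSum

variable {n : ℕ} {t : ℝ}

def geomSum (n : ℕ) (t : ℝ) : ℝ := ∑ k ∈ range n, (1 - t) ^ k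

def negDeriv (n : ℕ) (t : ℝ) : ℝ := ∑ k ∈ range n, (k : ℝ) * (1 - t) ^ (k - 1)

lemma mul_geomSum (n : ℕ) (t : ℝ) : t * geomSum n t = 1 - (1 - t) ^ n := by
  linear_combination (norm := (unfold geomSum; ring)) -geom_sum_mul (1 - t) n

lemma geomSum_pos (hn : 0 < n) (ht : t ≤ 1) : 0 < geomSum n t :=
  sum_pos' (fun k _ => pow_nonneg (by linarith) k) ⟨0, mem_range.2 hn, by simp⟩

lemma negDeriv_nonneg (ht : t ≤ 1) : 0 ≤ negDeriv n t :=
  sum_nonneg fun k _ => mul_nonneg k.cast_nonneg (pow_nonneg (by linarith) _)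

lemma geomSum_zero (n : ℕ) : geomSum n 0 = n := by simp [geomSum]

lemma geomSum_one (hn : 0 < n) : geomSum n 1 = 1 := by simp [geomSum, hn.ne']

lemma hasDerivAt_geomSum (n : ℕ) (t : ℝ) : HasDerivAt (geomSum n) (-negDeriv n t) t := by
  have : HasDerivAt (geomSum n) (∑ k ∈ range n, (k : ℝ) * (1 - t) ^ (k - 1) * -1) t :=
    HasDerivAt.fun_sum fun k _ => ((hasDerivAt_id t).const_sub 1).pow k
  simpa only [negDeriv, mul_neg_one, sum_neg_distrib] using this

lemma one_sub_one_sub_pow_sub_eq_sq_mul (n : ℕ) (t : ℝ) :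
    1 - (1 - t) ^ n - n * t * (1 - t) ^ (n - 1) = t ^ 2 * negDeriv n t := by
  induction n with
  | zero => simp [negDeriv]
  | succ m ih =>
    rcases m with _ | m
    · simp [negDeriv]
    · simp only [negDeriv, sum_range_succ, Nat.add_sub_cancel] at ih ⊢
      push_cast at ih ⊢
      linear_combination ih

lemma continuous_geomSum (n : ℕ) : Continuous (geomSum n) :=
  continuous_finsetSum _ fun _ _ => by fun_prop

lemma continuous_negDeriv (n : ℕ) : Continuous (negDeriv n) :=
  continuous_finsetSum _ fun _ _ => by fun_prop

lemma intervalIntegrable_negDeriv_div_geomSum (hn : 0 < n) :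
    IntervalIntegrable (fun t => negDeriv n t / geomSum n t) MeasureTheory.volume 0 1 := by
  apply ContinuousOn.intervalIntegrable
  rw [Set.uIcc_of_le zero_le_one]
  exact (continuous_negDeriv n).continuousOn.div (continuous_geomSum n).continuousOn
    fun t ht => (geomSum_pos hn ht.2).ne'

lemma integral_negDeriv_div_geomSum (hn : 0 < n) :
    ∫ t in (0:ℝ)..1, negDeriv n t / geomSum n t = log n := by
  have hderiv : ∀ t ∈ Set.uIcc (0:ℝ) 1,
      HasDerivAt (fun t => -log (geomSum n t)) (negDeriv n t / geomSum n t) t := by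
    intro t ht
    rw [Set.uIcc_of_le zero_le_one] at ht
    rw [show negDeriv n t / geomSum n t = -(-negDeriv n t / geomSum n t) by ring]
    exact ((hasDerivAt_geomSum n t).log (geomSum_pos hn ht.2).ne').fun_neg
  rw [integral_eq_sub_of_hasDerivAt hderiv (intervalIntegrable_negDeriv_div_geomSum hn),
    geomSum_one hn, geomSum_zero]
  simp

lemma le_inv_geomSum_of_feasible {u : ℝ} (hn : 0 < n) (ht : t ∈ Set.Ioc (0:ℝ) 1)
    (hfeas : ((1 - (1 - t) ^ n) / t) * u ≤ 1) : u ≤ (geomSum n t)⁻¹ := by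
  rw [← mul_geomSum, mul_div_cancel_left₀ _ ht.1.ne'] at hfeas
  rwa [← one_div, le_div_iff₀ (geomSum_pos hn ht.2), mul_comm]

lemma weight_mul_le_of_feasible {U : ℝ → ℝ} (hn : 0 < n)
    (hfeas : ∀ q ∈ Set.Ioc (0:ℝ) 1, ((1 - (1 - q) ^ n) / q) * U q ≤ 1)
    (ht : t ∈ Set.Icc (0:ℝ) 1) :
    ((1 - (1 - t) ^ n - n * t * (1 - t) ^ (n - 1)) / t ^ 2) * U t
      ≤ negDeriv n t / geomSum n t := by
  rcases ht.1.eq_or_lt with rfl | ht0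
  · simpa using div_nonneg (negDeriv_nonneg zero_le_one) (geomSum_pos hn zero_le_one).le
  · rw [one_sub_one_sub_pow_sub_eq_sq_mul, mul_div_cancel_left₀ _ (by positivity), div_eq_mul_inv]
    exact mul_le_mul_of_nonneg_left
      (le_inv_geomSum_of_feasible hn ⟨ht0, ht.2⟩ (hfeas t ⟨ht0, ht.2⟩)) (negDeriv_nonneg ht.2)

end OneSubGeomSum

open OneSubGeomSum in
lemma integral_weight_mul_le_log {n : ℕ} {U : ℝ → ℝ} (hn : 0 < n)
    (hfeas : ∀ q ∈ Set.Ioc (0:ℝ) 1, ((1 - (1 - q) ^ n) / q) * U q ≤ 1) :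
    ∫ t in (0:ℝ)..1, ((1 - (1 - t) ^ n - n * t * (1 - t) ^ (n - 1)) / t ^ 2) * U t ≤ log n := by
  by_cases hI : IntervalIntegrable
      (fun t => ((1 - (1 - t) ^ n - n * t * (1 - t) ^ (n - 1)) / t ^ 2) * U t)
      MeasureTheory.volume 0 1
  · rw [← integral_negDeriv_div_geomSum hn]
    exact integral_mono_on zero_le_one hI (intervalIntegrable_negDeriv_div_geomSum hn)
      fun t ht => weight_mul_le_of_feasible hn hfeas ht
  · -- a non-integrable integrand has integral `0` in Mathlib
    rw [integral_undef hI]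
    exact log_natCast_nonneg n

lemma log_le_sum_range_one_div_succ (n : ℕ) :
    log n ≤ ∑ j ∈ range n, (1 : ℝ) / (j + 1) := by
  have := log_le_harmonic_floor n n.cast_nonneg
  rw [Nat.floor_natCast] at this
  simpa [harmonic, one_div] using this

theorem stmt_18_general (n : ℕ) (hn : 0 < n) (U : ℝ → ℝ)
    (hfeas : ∀ q ∈ Set.Ioc (0:ℝ) 1, ((1 - (1 - q) ^ n) / q) * U q ≤ 1) :
    U 1 + (∫ t in (0:ℝ)..1,
        ((1 - (1 - t) ^ n - n * t * (1 - t) ^ (n - 1)) / t ^ 2) * U t)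
      ≤ (∑ j ∈ Finset.range n, (1 : ℝ) / (j + 1)) + 1 := by
  have hU1 : U 1 ≤ 1 := by simpa [zero_pow hn.ne'] using hfeas 1 ⟨one_pos, le_rfl⟩
  linarith [integral_weight_mul_le_log hn hfeas, log_le_sum_range_one_div_succ n]

theorem stmt_18 (n : ℕ) (hn : 0 < n) (U : ℝ → ℝ)
    (hconc : ConcaveOn ℝ (Set.Icc (0:ℝ) 1) U)
    (h0 : 0 ≤ U 0)
    (hfeas : ∀ q ∈ Set.Ioc (0:ℝ) 1, ((1 - (1 - q) ^ n) / q) * U q ≤ 1) :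
    U 1 + (∫ t in (0:ℝ)..1,
        ((1 - (1 - t) ^ n - n * t * (1 - t) ^ (n - 1)) / t ^ 2) * U t)
      ≤ (∑ j ∈ Finset.range n, (1 : ℝ) / (j + 1)) + 1 :=
  stmt_18_general n hn U hfeas

end
end
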